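/- arXiv:1507.05297 — 2 statements merged into one kernel-verified Lean document; each statement's English description precedes it below -/
import Mathlib

section
/- There exists a constant C > 0, depending only on α and d, such that for every x ∈ ℤ^d one has (1/ν_x) · Σ_{y ∈ ℤ^d, |y−x|_1 = 1} ρ(x,y)² μ_{xy} ≤ C. (In other words, ρ is an intrinsic metric for the weighted lattice.) -/
open scoped BigOperators

/-- ℓ∞ norm on ℤ^d, as a natural number. -/
def linf {d : ℕ} (x : Fin d → ℤ) : ℕ :=
  Finset.univ.sup fun i => (x i).natAbs

/-- ℓ¹ norm on ℤ^d, as a natural number. -/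
def l1 {d : ℕ} (x : Fin d → ℤ) : ℕ :=
  ∑ i, (x i).natAbs

/-- `ν x = (max(|x|,1))^α`. -/
noncomputable def nu (α : ℝ) {d : ℕ} (x : Fin d → ℤ) : ℝ :=
  ((max (linf x) 1 : ℕ) : ℝ) ^ α

/-- The conductance `μ x y = (max(|x|,|y|))^(-α)` if `|x-y|₁ = 1`, and `0` otherwise. -/
noncomputable def mu (α : ℝ) {d : ℕ} (x y : Fin d → ℤ) : ℝ :=
  if l1 (x - y) = 1 then ((max (linf x) (linf y) : ℕ) : ℝ) ^ (-α) else 0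

/-- `z 0, …, z m` is a path: consecutive points are at ℓ¹-distance one. -/
def IsPath {d : ℕ} (z : ℕ → Fin d → ℤ) (m : ℕ) : Prop :=
  ∀ i < m, l1 (z (i + 1) - z i) = 1

/-- The metric `ρ(x,y)`: `0` if `x = y`, otherwise the infimum of `∑ ν (z i)` over
paths from `x` to `y`. -/
noncomputable def rho (α : ℝ) {d : ℕ} (x y : Fin d → ℤ) : ℝ :=
  if x = y then 0
  else sInf {S : ℝ | ∃ (m : ℕ) (z : ℕ → Fin d → ℤ), IsPath z m ∧ z 0 = x ∧ z m = y ∧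
    S = ∑ i ∈ Finset.range (m + 1), nu α (z i)}

/-- `ρ_x(r) = (max(|x|,r))^α · r`. -/
noncomputable def rhox (α : ℝ) {d : ℕ} (x : Fin d → ℤ) (r : ℝ) : ℝ :=
  (max ((linf x : ℕ) : ℝ) r) ^ α * r

/-- `ρ_x⁻¹(r) = (max(|x|, r^{1/(1+α)}))^{-α} · r`, the inverse function of `ρ_x`. -/
noncomputable def rhoxInv (α : ℝ) {d : ℕ} (x : Fin d → ℤ) (r : ℝ) : ℝ :=
  (max ((linf x : ℕ) : ℝ) (r ^ (1 / (1 + α)))) ^ (-α) * r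

/-- `V(x,r) = ν(B(x,r))`, the ν-volume of the ℓ∞-ball of radius `r` about `x`. -/
noncomputable def V (α : ℝ) {d : ℕ} (x : Fin d → ℤ) (r : ℝ) : ℝ :=
  ∑' y : {y : Fin d → ℤ // ((linf (y - x) : ℕ) : ℝ) ≤ r}, nu α y.1

/-- `V_ρ(x,r) = ν(B_ρ(x,r))`, the ν-volume of the ρ-ball of radius `r` about `x`. -/
noncomputable def Vrho (α : ℝ) {d : ℕ} (x : Fin d → ℤ) (r : ℝ) : ℝ :=
  ∑' y : {y : Fin d → ℤ // rho α x y ≤ r}, nu α y.1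

/-! Only nearest neighbours enter the sum, and there are at most `3 ^ d` of them. Along an edge
`|x|` changes by at most one, so `ν_y`, `ν_x` and `1 / μ_{xy}` agree up to a factor `2 ^ |α|`.
The two-point path gives `ρ(x,y) ≤ ν_x + ν_y ≲ ν_x`, hence `ρ(x,y)² μ_{xy} ≲ ν_x² / ν_x = ν_x`. -/

lemma natAbs_le_l1 {d : ℕ} (e : Fin d → ℤ) (i : Fin d) : (e i).natAbs ≤ l1 e :=
  Finset.single_le_sum (f := fun j => (e j).natAbs) (fun _ _ => Nat.zero_le _)
    (Finset.mem_univ i)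

lemma linf_le_l1 {d : ℕ} (e : Fin d → ℤ) : linf e ≤ l1 e :=
  Finset.sup_le fun i _ => natAbs_le_l1 e i

lemma one_le_linf_of_l1_eq_one {d : ℕ} {e : Fin d → ℤ} (h : l1 e = 1) : 1 ≤ linf e := by
  obtain ⟨i, -, hi⟩ := Finset.exists_ne_zero_of_sum_ne_zero (h.trans_ne one_ne_zero)
  exact (Nat.one_le_iff_ne_zero.mpr hi).trans
    (Finset.le_sup (f := fun j => (e j).natAbs) (Finset.mem_univ i))

lemma linf_add_le {d : ℕ} (x y : Fin d → ℤ) : linf (x + y) ≤ linf x + linf y :=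
  Finset.sup_le fun i _ => (Int.natAbs_add_le _ _).trans <| Nat.add_le_add
    (Finset.le_sup (f := fun j => (x j).natAbs) (Finset.mem_univ i))
    (Finset.le_sup (f := fun j => (y j).natAbs) (Finset.mem_univ i))

lemma linf_neg {d : ℕ} (x : Fin d → ℤ) : linf (-x) = linf x := by
  simp only [linf, Pi.neg_apply, Int.natAbs_neg]

lemma l1_sub_comm {d : ℕ} (x y : Fin d → ℤ) : l1 (x - y) = l1 (y - x) := by
  rw [← neg_sub, l1]
  simp only [Pi.neg_apply, Int.natAbs_neg, l1]

lemma rpow_le_two_rpow_abs_mul_rpow {a b : ℝ} (α : ℝ) (ha : 0 < a) (hb : 0 < b)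
    (hba : b ≤ 2 * a) (hab : a ≤ 2 * b) : b ^ α ≤ 2 ^ |α| * a ^ α := by
  rcases le_or_gt 0 α with hα | hα
  · calc b ^ α ≤ (2 * a) ^ α := by gcongr
      _ = 2 ^ |α| * a ^ α := by rw [abs_of_nonneg hα, Real.mul_rpow zero_le_two ha.le]
  · have : 2 ^ α * b ^ α ≤ a ^ α := by
      rw [← Real.mul_rpow zero_le_two hb.le]
      exact Real.rpow_le_rpow_of_nonpos ha hab hα.le
    rwa [abs_of_neg hα, Real.rpow_neg zero_le_two, ← div_eq_inv_mul,
      le_div_iff₀' (by positivity)]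

lemma nu_pos (α : ℝ) {d : ℕ} (x : Fin d → ℤ) : 0 < nu α x :=
  Real.rpow_pos_of_pos (by simp) α

lemma mu_nonneg (α : ℝ) {d : ℕ} (x y : Fin d → ℤ) : 0 ≤ mu α x y := by
  unfold mu
  split_ifs <;> positivity

lemma rho_nonneg (α : ℝ) {d : ℕ} (x y : Fin d → ℤ) : 0 ≤ rho α x y := by
  unfold rho
  split_ifs
  · rfl
  · refine Real.sInf_nonneg ?_
    rintro _ ⟨m, z, -, -, -, rfl⟩
    exact Finset.sum_nonneg fun i _ => (nu_pos α (z i)).le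

section Neighbours

variable (α : ℝ) {d : ℕ} {x y : Fin d → ℤ}

lemma linf_le_linf_add_one_of_l1_sub_eq_one (h : l1 (y - x) = 1) : linf y ≤ linf x + 1 :=
  calc linf y = linf (x + (y - x)) := by rw [add_sub_cancel]
    _ ≤ linf x + linf (y - x) := linf_add_le _ _
    _ ≤ linf x + 1 := by grw [linf_le_l1 (y - x), h]

lemma one_le_max_linf_of_l1_sub_eq_one (h : l1 (y - x) = 1) : 1 ≤ max (linf x) (linf y) := by
  have : linf (y - x) ≤ linf y + linf x := by
    simpa only [sub_eq_add_neg, linf_neg] using linf_add_le y (-x)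
  have := one_le_linf_of_l1_eq_one h
  omega

lemma nu_le_of_l1_sub_eq_one (h : l1 (y - x) = 1) : nu α y ≤ 2 ^ |α| * nu α x := by
  have := linf_le_linf_add_one_of_l1_sub_eq_one h
  have := linf_le_linf_add_one_of_l1_sub_eq_one ((l1_sub_comm y x).symm.trans h)
  refine rpow_le_two_rpow_abs_mul_rpow α (by simp) (by simp) ?_ ?_ <;>
    exact_mod_cast (by omega)

lemma mu_le_of_l1_sub_eq_one (h : l1 (y - x) = 1) : mu α x y ≤ 2 ^ |α| * (nu α x)⁻¹ := by
  have := linf_le_linf_add_one_of_l1_sub_eq_one h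
  have := linf_le_linf_add_one_of_l1_sub_eq_one ((l1_sub_comm y x).symm.trans h)
  have := one_le_max_linf_of_l1_sub_eq_one h
  rw [mu, if_pos ((l1_sub_comm x y).trans h), nu, ← Real.rpow_neg (Nat.cast_nonneg _),
    ← abs_neg]
  refine rpow_le_two_rpow_abs_mul_rpow (-α) (by simp) (Nat.cast_pos.mpr (by omega)) ?_ ?_ <;>
    exact_mod_cast (by omega)

lemma rho_le_nu_add_nu_of_l1_sub_eq_one (h : l1 (y - x) = 1) :
    rho α x y ≤ nu α x + nu α y := by
  have hxy : x ≠ y := by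
    rintro rfl
    simp [l1] at h
  rw [rho, if_neg hxy]
  refine csInf_le ⟨0, ?_⟩ ⟨1, fun n => if n = 0 then x else y, ?_, rfl, rfl, ?_⟩
  · rintro _ ⟨m, z, -, -, -, rfl⟩
    exact Finset.sum_nonneg fun i _ => (nu_pos α (z i)).le
  · intro i hi
    obtain rfl : i = 0 := by omega
    simpa using h
  · simp [Finset.sum_range_succ]

lemma rho_sq_mul_mu_le_of_l1_sub_eq_one (h : l1 (y - x) = 1) :
    rho α x y ^ 2 * mu α x y ≤ (1 + 2 ^ |α|) ^ 2 * 2 ^ |α| * nu α x := by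
  have hnu := nu_pos α x
  have hrho : rho α x y ≤ (1 + 2 ^ |α|) * nu α x := by
    linarith [rho_le_nu_add_nu_of_l1_sub_eq_one α h, nu_le_of_l1_sub_eq_one α h]
  calc rho α x y ^ 2 * mu α x y
      ≤ ((1 + 2 ^ |α|) * nu α x) ^ 2 * (2 ^ |α| * (nu α x)⁻¹) := by
        gcongr
        · exact mu_nonneg α x y
        · exact rho_nonneg α x y
        · exact mu_le_of_l1_sub_eq_one α h
    _ = (1 + 2 ^ |α|) ^ 2 * 2 ^ |α| * nu α x := by
        field_simp

end Neighbours

lemma tsum_neighbours_le {d : ℕ} (x : Fin d → ℤ) {f : (Fin d → ℤ) → ℝ} {b : ℝ} (hb : 0 ≤ b)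
    (hf : ∀ y, l1 (y - x) = 1 → f y ≤ b) :
    ∑' y : {y : Fin d → ℤ // l1 (y - x) = 1}, f y ≤ 3 ^ d * b := by
  let φ : {y : Fin d → ℤ // l1 (y - x) = 1} → Fin d → Set.Icc (-1 : ℤ) 1 := fun y i =>
    ⟨(y.1 - x) i, by have := y.2 ▸ natAbs_le_l1 (y.1 - x) i; constructor <;> omega⟩
  have hφ : Function.Injective φ := fun y y' hyy' => Subtype.ext <| sub_left_injective <|
    funext fun i => congrArg Subtype.val (congrFun hyy' i)
  have := Finite.of_injective φ hφ
  let := Fintype.ofFinite {y : Fin d → ℤ // l1 (y - x) = 1}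
  have hcard : Fintype.card {y : Fin d → ℤ // l1 (y - x) = 1} ≤ 3 ^ d :=
    (Fintype.card_le_of_injective φ hφ).trans_eq (by simp)
  rw [tsum_fintype]
  calc ∑ y : {y : Fin d → ℤ // l1 (y - x) = 1}, f y ≤ Finset.univ.card • b := Finset.sum_le_card_nsmul _ _ _ fun y _ => hf y y.2
    _ ≤ 3 ^ d * b := by
        rw [nsmul_eq_mul, Finset.card_univ]
        gcongr
        exact_mod_cast hcard

theorem intrinsic_metric_general (d : ℕ) (α : ℝ) :
    ∃ C : ℝ, 0 < C ∧ ∀ x : Fin d → ℤ,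
      (1 / nu α x) *
        (∑' y : {y : Fin d → ℤ // l1 (y - x) = 1}, rho α x y.1 ^ 2 * mu α x y.1) ≤ C := by
  refine ⟨3 ^ d * ((1 + 2 ^ |α|) ^ 2 * 2 ^ |α|), by positivity, fun x => ?_⟩
  rw [one_div, inv_mul_le_iff₀ (nu_pos α x)]
  calc ∑' y : {y : Fin d → ℤ // l1 (y - x) = 1}, rho α x y.1 ^ 2 * mu α x y.1
      ≤ 3 ^ d * ((1 + 2 ^ |α|) ^ 2 * 2 ^ |α| * nu α x) :=
        tsum_neighbours_le x (mul_pos (by positivity) (nu_pos α x)).le fun _ hy => rho_sq_mul_mu_le_of_l1_sub_eq_one α hy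
    _ = nu α x * (3 ^ d * ((1 + 2 ^ |α|) ^ 2 * 2 ^ |α|)) := by ring

/-- `ρ` is an intrinsic metric: there is a constant `C > 0`,
depending only on `α` and `d`, such that for every `x ∈ ℤ^d`,
`(1/ν_x) ∑_{y : |y-x|₁=1} ρ(x,y)² μ_{xy} ≤ C`. -/
theorem intrinsic_metric (d : ℕ) (hd : 1 ≤ d) (α : ℝ) (hα : -1 < α) :
    ∃ C : ℝ, 0 < C ∧ ∀ x : Fin d → ℤ,
      (1 / nu α x) *
        (∑' y : {y : Fin d → ℤ // l1 (y - x) = 1}, rho α x y.1 ^ 2 * mu α x y.1) ≤ C :=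
  intrinsic_metric_general d α
end

section
/- There exists a constant c₁ ∈ (0,1], depending only on α and d, such that for all x, y ∈ ℤ^d with x ≠ y one has c₁ · ρ_x(|x−y|) ≤ ρ(x,y) ≤ c₁^{−1} · ρ_x(|x−y|). -/
open scoped BigOperators

/-!
Write `r = |x - y|` and `R = max(|x|, r)`, so that `ρ_x(r) = R^α r`.

Lower bound: a path from `x` to `y` meets every ℓ∞-sphere about its starting point of radius
`k ≤ r`, so it has more than `r/4` points on which `ν ≳ R^α`: those within distance `r` of `x`
when `α ≤ 0`, and those within distance `r/4` of an endpoint of norm at least `R/2` when `α ≥ 0`.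

Upper bound: the staircase path correcting one coordinate after another has at most `d r` steps
and stays in the box spanned by `x` and `y`, where `ν ≲ R^α` unless `α < 0` and `|x| < 2r`. In
that case, on each leg the moving coordinate takes every absolute value at most twice, and
`∑_{u ≤ 3r} max(u,1)^α ≲ r^{1+α}/(1+α) ≲ R^α r / (1+α)`.
-/

namespace ZdMetric

open Finset

variable {d : ℕ}

theorem natAbs_le_linf (x : Fin d → ℤ) (i : Fin d) : (x i).natAbs ≤ linf x :=
  le_sup (f := fun i => (x i).natAbs) (mem_univ i)

theorem linf_le_iff {x : Fin d → ℤ} {k : ℕ} : linf x ≤ k ↔ ∀ i, (x i).natAbs ≤ k := by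
  simp [linf, Finset.sup_le_iff]

theorem linf_sub_comm (x y : Fin d → ℤ) : linf (x - y) = linf (y - x) := by
  simp only [linf, Pi.sub_apply, ← Int.natAbs_neg (x _ - y _), neg_sub]

theorem l1_sub_comm (x y : Fin d → ℤ) : l1 (x - y) = l1 (y - x) := by
  simp only [l1, Pi.sub_apply, ← Int.natAbs_neg (x _ - y _), neg_sub]

theorem linf_le_linf_add_linf_sub (x y : Fin d → ℤ) : linf x ≤ linf y + linf (x - y) :=
  linf_le_iff.2 fun i => by
    have := natAbs_le_linf y i
    have := natAbs_le_linf (x - y) i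
    simp only [Pi.sub_apply] at *
    omega

theorem linf_sub_le_add (x y w : Fin d → ℤ) : linf (x - w) ≤ linf (x - y) + linf (y - w) := by
  simpa using linf_le_linf_add_linf_sub (x - w) (x - y)

theorem linf_sub_le (x y : Fin d → ℤ) : linf (x - y) ≤ linf x + linf y := by
  have := linf_sub_le_add x 0 y
  rwa [linf_sub_comm 0 y, sub_zero, sub_zero] at this

theorem linf_le_l1 (x : Fin d → ℤ) : linf x ≤ l1 x :=
  Finset.sup_le fun i _ => single_le_sum (f := fun j => (x j).natAbs) (fun _ _ => Nat.zero_le _)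
    (mem_univ i)

theorem l1_le_mul_linf (x : Fin d → ℤ) : l1 x ≤ d * linf x := by
  simpa [l1] using sum_le_card_nsmul univ (fun i => (x i).natAbs) (linf x)
    fun i _ => natAbs_le_linf x i

theorem one_le_linf_sub {x y : Fin d → ℤ} (h : x ≠ y) : 1 ≤ linf (x - y) := by
  obtain ⟨i, hi⟩ := Function.ne_iff.1 h
  have := natAbs_le_linf (x - y) i
  simp only [Pi.sub_apply] at this
  omega

theorem nu_pos (α : ℝ) (x : Fin d → ℤ) : 0 < nu α x :=
  Real.rpow_pos_of_pos (Nat.cast_pos.2 (lt_max_of_lt_right one_pos)) α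

theorem intermediate_value_of_le_add_one {f : ℕ → ℕ} {m k : ℕ}
    (hf : ∀ i < m, f (i + 1) ≤ f i + 1) (h0 : f 0 ≤ k) (hm : k ≤ f m) : ∃ i ≤ m, f i = k := by
  induction m with
  | zero => exact ⟨0, le_rfl, by omega⟩
  | succ m ih =>
    by_cases hk : k ≤ f m
    · obtain ⟨i, hi, hfi⟩ := ih (fun i hi => hf i (by omega)) hk
      exact ⟨i, by omega, hfi⟩
    · exact ⟨m + 1, le_rfl, by have := hf m (by omega); omega⟩

/-- A path from `z 0` visits every ℓ∞-sphere about `z 0` of radius at most `|z m - z 0|`. -/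
theorem add_one_mul_le_sum_nu {α : ℝ} {z : ℕ → Fin d → ℤ} {m : ℕ} (hz : IsPath z m)
    {K : ℕ} (hK : K ≤ linf (z m - z 0)) {g : ℝ} (hg0 : 0 ≤ g)
    (hg : ∀ c, linf (c - z 0) ≤ K → g ≤ nu α c) :
    (K + 1) * g ≤ ∑ i ∈ range (m + 1), nu α (z i) := by
  set f : ℕ → ℕ := fun i => linf (z i - z 0)
  set s := (range (m + 1)).filter (f · ≤ K)
  have hstep : ∀ i < m, f (i + 1) ≤ f i + 1 := fun i hi => by
    show linf (z (i + 1) - z 0) ≤ linf (z i - z 0) + 1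
    have := linf_sub_le_add (z (i + 1)) (z i) (z 0)
    have := (linf_le_l1 (z (i + 1) - z i)).trans_eq (hz i hi)
    omega
  have hcard : K + 1 ≤ #s := by
    rw [← card_range (K + 1)]
    refine (card_le_card fun k hk => ?_).trans (card_image_le (f := f))
    obtain ⟨i, hi, hfi⟩ := intermediate_value_of_le_add_one hstep (by simp [f, linf])
      ((mem_range_succ_iff.1 hk).trans hK)
    exact mem_image.2
      ⟨i, mem_filter.2 ⟨mem_range_succ_iff.2 hi, hfi ▸ mem_range_succ_iff.1 hk⟩, hfi⟩
  calc (K + 1) * g ≤ #s * g := by gcongr; exact_mod_cast hcard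
    _ ≤ ∑ i ∈ s, nu α (z i) := by
      rw [← nsmul_eq_mul]
      exact card_nsmul_le_sum _ _ _ fun i hi => hg _ (mem_filter.1 hi).2
    _ ≤ ∑ i ∈ range (m + 1), nu α (z i) :=
      sum_le_sum_of_subset_of_nonneg (filter_subset _ _) fun i _ _ => (nu_pos α _).le

/-- An injective family of integers takes each absolute value at most twice. -/
theorem sum_natAbs_le_two_mul {ι : Type*} (s : Finset ι) {v : ι → ℤ} (hv : Set.InjOn v s)
    {S : ℕ} (hS : ∀ t ∈ s, (v t).natAbs ≤ S) {g : ℕ → ℝ} (hg : ∀ u, 0 ≤ g u) :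
    ∑ t ∈ s, g (v t).natAbs ≤ 2 * ∑ u ∈ range (S + 1), g u := by
  classical
  have hfiber : ∀ u, #{t ∈ s | (v t).natAbs = u} ≤ 2 := fun u => by
    refine (card_le_card_of_injOn v (t := {(u : ℤ), -(u : ℤ)}) (fun t ht => ?_)
      (hv.mono fun t ht => (mem_filter.1 ht).1)).trans card_le_two
    have := Int.natAbs_eq (v t)
    rw [(mem_filter.1 ht).2] at this
    simpa using this
  rw [sum_comp, mul_sum]
  calc ∑ u ∈ s.image fun t => (v t).natAbs, #{t ∈ s | (v t).natAbs = u} • g u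
      ≤ ∑ u ∈ s.image fun t => (v t).natAbs, 2 * g u := sum_le_sum fun u _ => by
        rw [nsmul_eq_mul]; gcongr; exacts [hg u, by exact_mod_cast hfiber u]
    _ ≤ ∑ u ∈ range (S + 1), 2 * g u := by
      refine sum_le_sum_of_subset_of_nonneg (fun u hu => ?_) fun u _ _ => by linarith [hg u]
      obtain ⟨t, ht, rfl⟩ := mem_image.1 hu
      exact mem_range_succ_iff.2 (hS t ht)

theorem mul_rpow_sub_one_le_rpow_sub_rpow {p s : ℝ} (hp0 : 0 ≤ p) (hp1 : p ≤ 1) (hs : 1 ≤ s) :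
    p * s ^ (p - 1) ≤ s ^ p - (s - 1) ^ p := by
  have hs0 : 0 < s := by linarith
  have hinv : 1 / s ≤ 1 := (div_le_one hs0).2 hs
  have bernoulli : (1 + -(1 / s)) ^ p ≤ 1 + p * -(1 / s) :=
    rpow_one_add_le_one_add_mul_self (by linarith) hp0 hp1
  have h := mul_le_mul_of_nonneg_left bernoulli (Real.rpow_nonneg hs0.le p)
  rw [← Real.mul_rpow hs0.le (by linarith)] at h
  rw [Real.rpow_sub_one hs0.ne']
  have e1 : s * (1 + -(1 / s)) = s - 1 := by field_simp; ring
  have e2 : s ^ p * (1 + p * -(1 / s)) = s ^ p - p * (s ^ p / s) := by field_simp; ring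
  rw [e1, e2] at h
  linarith

theorem sum_range_max_one_rpow_le {α : ℝ} (hα : -1 < α) (hα0 : α ≤ 0) (S : ℕ) :
    ∑ u ∈ range (S + 1), ((max u 1 : ℕ) : ℝ) ^ α ≤ 1 + (S : ℝ) ^ (1 + α) / (1 + α) := by
  have hp : 0 < 1 + α := by linarith
  induction S with
  | zero => simp [Real.zero_rpow hp.ne']
  | succ S ih =>
    have step := mul_rpow_sub_one_le_rpow_sub_rpow hp.le (by linarith)
      (by linarith [(Nat.cast_nonneg S : (0 : ℝ) ≤ S)] : (1 : ℝ) ≤ S + 1)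
    rw [add_sub_cancel_right, add_sub_cancel_left, ← le_div_iff₀' hp, sub_div] at step
    rw [sum_range_succ, Nat.max_eq_left (by omega)]
    push_cast at ih ⊢
    linarith

section StairPath

variable (x y : Fin d → ℤ)

def legLength (j : ℕ) : ℕ := if h : j < d then (y ⟨j, h⟩ - x ⟨j, h⟩).natAbs else 0

def legStart (k : ℕ) : ℕ := ∑ j ∈ range k, legLength x y j

/-- How far coordinate `i` has moved from `x i` towards `y i` after `t` steps of `stairPath`. -/
def progress (t : ℕ) (i : Fin d) : ℤ :=
  min (max ((t : ℤ) - legStart x y i) 0) (legLength x y i)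

/-- The lattice path from `x` to `y` that corrects coordinate `0`, then coordinate `1`, and so on;
it has `l1 (y - x)` steps. -/
def stairPath (t : ℕ) : Fin d → ℤ := fun i => x i + (y i - x i).sign * progress x y t i

variable {x y}

theorem legLength_val (i : Fin d) : legLength x y i = (y i - x i).natAbs := by
  simp [legLength]

theorem legStart_succ (j : ℕ) : legStart x y (j + 1) = legStart x y j + legLength x y j :=
  sum_range_succ _ _

theorem legStart_mono : Monotone (legStart x y) := fun _ _ h =>
  sum_le_sum_of_subset (range_subset_range.2 h)

theorem legStart_dim : legStart x y d = l1 (y - x) := by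
  rw [legStart, ← Fin.sum_univ_eq_sum_range, l1]
  simp [legLength_val]

theorem progress_nonneg (t : ℕ) (i : Fin d) : 0 ≤ progress x y t i := by
  unfold progress; omega

theorem progress_le (t : ℕ) (i : Fin d) : progress x y t i ≤ legLength x y i := by
  unfold progress; omega

theorem progress_le_succ (t : ℕ) (i : Fin d) : progress x y t i ≤ progress x y (t + 1) i := by
  unfold progress; push_cast; omega

theorem progress_zero (i : Fin d) : progress x y 0 i = 0 := by
  unfold progress; omega

theorem progress_l1 (i : Fin d) : progress x y (l1 (y - x)) i = legLength x y i := by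
  have := legStart_mono (x := x) (y := y) i.isLt
  rw [legStart_succ, legStart_dim] at this
  unfold progress; omega

theorem progress_of_mem_leg {j t : ℕ} (hj : j < d)
    (ht : t ∈ Ico (legStart x y j) (legStart x y (j + 1))) :
    progress x y t ⟨j, hj⟩ = t - legStart x y j := by
  rw [mem_Ico, legStart_succ] at ht
  show min (max ((t : ℤ) - legStart x y j) 0) (legLength x y j) = _
  omega

theorem sum_progress (t : ℕ) : ∑ i, progress x y t i = min (t : ℤ) (l1 (y - x)) := by
  have hleg : ∀ j ∈ range d, min (max ((t : ℤ) - legStart x y j) 0) (legLength x y j)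
      = min (t : ℤ) (legStart x y (j + 1)) - min (t : ℤ) (legStart x y j) := fun j _ => by
    rw [legStart_succ]; push_cast; omega
  unfold progress
  rw [← legStart_dim, Fin.sum_univ_eq_sum_range (fun j => min (max ((t : ℤ) - legStart x y j) 0)
    (legLength x y j)), sum_congr rfl hleg, sum_range_sub (fun j => min (t : ℤ) (legStart x y j))]
  simp [legStart]

theorem stairPath_zero : stairPath x y 0 = x := by
  ext i; simp [stairPath, progress_zero]

theorem stairPath_l1 : stairPath x y (l1 (y - x)) = y := by
  ext i
  rw [stairPath, progress_l1, legLength_val, Int.sign_mul_natAbs]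
  ring

theorem isPath_stairPath : IsPath (stairPath x y) (l1 (y - x)) := by
  intro t ht
  have hstep : ∀ i, (((stairPath x y (t + 1) - stairPath x y t) i).natAbs : ℤ)
      = progress x y (t + 1) i - progress x y t i := fun i => by
    have hmono := progress_le_succ (x := x) (y := y) t i
    rcases eq_or_ne (y i - x i) 0 with h | h
    · have hle := progress_le (x := x) (y := y) (t + 1) i
      rw [legLength_val, h, Int.natAbs_zero] at hle
      simp only [stairPath, Pi.sub_apply, h, Int.sign_zero, zero_mul, add_zero, sub_self,
        Int.natAbs_zero, Nat.cast_zero]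
      have := progress_nonneg (x := x) (y := y) t i
      omega
    · simp only [stairPath, Pi.sub_apply, add_sub_add_left_eq_sub, ← mul_sub, Int.natAbs_mul,
        Int.natAbs_sign_of_ne_zero h, one_mul]
      omega
  have : (l1 (stairPath x y (t + 1) - stairPath x y t) : ℤ) = 1 := by
    rw [l1, Nat.cast_sum, sum_congr rfl fun i _ => hstep i, sum_sub_distrib, sum_progress,
      sum_progress]
    omega
  exact_mod_cast this

theorem natAbs_stairPath_le (t : ℕ) (i : Fin d) :
    (stairPath x y t i).natAbs ≤ max (x i).natAbs (y i).natAbs ∧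
      (x i).natAbs ≤ (stairPath x y t i).natAbs + (x i - y i).natAbs := by
  have h0 := progress_nonneg (x := x) (y := y) t i
  have h1 := progress_le (x := x) (y := y) t i
  rw [legLength_val] at h1
  simp only [stairPath]
  rcases lt_trichotomy (y i - x i) 0 with h | h | h
  · rw [Int.sign_eq_neg_one_of_neg h]; omega
  · rw [h, Int.sign_zero]; omega
  · rw [Int.sign_eq_one_of_pos h]; omega

theorem linf_stairPath_le (t : ℕ) : linf (stairPath x y t) ≤ linf x + linf (x - y) :=
  linf_le_iff.2 fun i => by
    have := (natAbs_stairPath_le (x := x) (y := y) t i).1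
    have := natAbs_le_linf x i
    have := natAbs_le_linf (x - y) i
    simp only [Pi.sub_apply] at *
    omega

theorem linf_le_linf_stairPath_add (t : ℕ) : linf x ≤ linf (stairPath x y t) + linf (x - y) :=
  linf_le_iff.2 fun i => by
    have := (natAbs_stairPath_le (x := x) (y := y) t i).2
    have := natAbs_le_linf (stairPath x y t) i
    have := natAbs_le_linf (x - y) i
    simp only [Pi.sub_apply] at *
    omega

theorem sum_range_legStart (F : ℕ → ℝ) (k : ℕ) :
    ∑ t ∈ range (legStart x y k), F t
      = ∑ j ∈ range k, ∑ t ∈ Ico (legStart x y j) (legStart x y (j + 1)), F t := by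
  induction k with
  | zero => simp [legStart]
  | succ k ih =>
    rw [sum_range_succ, ← ih, range_eq_Ico, range_eq_Ico,
      sum_Ico_consecutive F (Nat.zero_le _) (legStart_mono k.le_succ)]

/-- On its `j`-th leg `stairPath` moves monotonically in coordinate `j`, which bounds its norm
from below. -/
theorem sum_leg_nu_le {α : ℝ} (hα : α ≤ 0) {j : ℕ} (hj : j < d) {S : ℕ}
    (hS : linf x + linf (x - y) ≤ S) :
    ∑ t ∈ Ico (legStart x y j) (legStart x y (j + 1)), nu α (stairPath x y t)
      ≤ 2 * ∑ u ∈ range (S + 1), ((max u 1 : ℕ) : ℝ) ^ α := by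
  set i : Fin d := ⟨j, hj⟩
  set s := Ico (legStart x y j) (legStart x y (j + 1))
  have hv : ∀ t ∈ s, stairPath x y t i = x i + (y i - x i).sign * (t - legStart x y j) :=
    fun t ht => by rw [stairPath, progress_of_mem_leg hj ht]
  have hinj : Set.InjOn (fun t => stairPath x y t i) s := by
    intro t₁ h₁ t₂ h₂ heq
    have hsign : (y i - x i).sign ≠ 0 := by
      rw [mem_coe, mem_Ico, legStart_succ] at h₁
      have hlen : legLength x y j = (y i - x i).natAbs := legLength_val i
      exact mt Int.sign_eq_zero_iff_zero.1 (Int.natAbs_ne_zero.1 (by omega))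
    simp only [hv t₁ h₁, hv t₂ h₂, add_right_inj, mul_right_inj' hsign] at heq
    omega
  calc ∑ t ∈ s, nu α (stairPath x y t)
      ≤ ∑ t ∈ s, ((max (stairPath x y t i).natAbs 1 : ℕ) : ℝ) ^ α :=
        sum_le_sum fun t _ => Real.rpow_le_rpow_of_nonpos
          (Nat.cast_pos.2 (lt_max_of_lt_right one_pos))
          (Nat.cast_le.2 (max_le_max_right 1 (natAbs_le_linf _ i))) hα
    _ ≤ 2 * ∑ u ∈ range (S + 1), ((max u 1 : ℕ) : ℝ) ^ α :=
        sum_natAbs_le_two_mul (g := fun u => ((max u 1 : ℕ) : ℝ) ^ α) s hinj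
          (fun t _ => (natAbs_le_linf _ i).trans ((linf_stairPath_le t).trans hS))
          fun u => Real.rpow_nonneg (Nat.cast_nonneg _) α

end StairPath

variable {α : ℝ} {x y : Fin d → ℤ}

variable (α x y) in
def pathCosts : Set ℝ :=
  {S | ∃ (m : ℕ) (z : ℕ → Fin d → ℤ), IsPath z m ∧ z 0 = x ∧ z m = y ∧
    S = ∑ i ∈ range (m + 1), nu α (z i)}

theorem rho_eq_sInf (h : x ≠ y) : rho α x y = sInf (pathCosts α x y) := if_neg h

theorem pathCosts_subset_symm : pathCosts α x y ⊆ pathCosts α y x := by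
  rintro _ ⟨m, z, hz, h0, hm, rfl⟩
  refine ⟨m, fun i => z (m - i), fun i hi => ?_, by simpa, by simpa, ?_⟩
  · obtain ⟨j, rfl⟩ : ∃ j, m = i + 1 + j := ⟨m - (i + 1), by omega⟩
    show l1 (z (i + 1 + j - (i + 1)) - z (i + 1 + j - i)) = 1
    rw [show i + 1 + j - (i + 1) = j by omega, show i + 1 + j - i = j + 1 by omega, l1_sub_comm]
    exact hz j (by omega)
  · exact (sum_range_reflect (fun i => nu α (z i)) (m + 1)).symm

theorem rho_comm (α : ℝ) (x y : Fin d → ℤ) : rho α x y = rho α y x := by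
  rcases eq_or_ne x y with rfl | h
  · rfl
  · rw [rho_eq_sInf h, rho_eq_sInf h.symm,
      pathCosts_subset_symm.antisymm pathCosts_subset_symm]

theorem stairPath_cost_mem_pathCosts :
    ∑ t ∈ range (l1 (y - x) + 1), nu α (stairPath x y t) ∈ pathCosts α x y :=
  ⟨_, _, isPath_stairPath, stairPath_zero, stairPath_l1, rfl⟩

theorem rho_le_stairPath_cost (h : x ≠ y) :
    rho α x y ≤ ∑ t ∈ range (l1 (y - x) + 1), nu α (stairPath x y t) := by
  refine rho_eq_sInf h ▸ csInf_le ⟨0, ?_⟩ stairPath_cost_mem_pathCosts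
  rintro _ ⟨m, z, -, -, -, rfl⟩
  exact sum_nonneg fun i _ => (nu_pos α _).le

theorem add_one_mul_le_rho (h : x ≠ y) {K : ℕ} (hK : K ≤ linf (x - y)) {g : ℝ} (hg0 : 0 ≤ g)
    (hg : ∀ c, linf (c - x) ≤ K → g ≤ nu α c) : (K + 1) * g ≤ rho α x y := by
  rw [rho_eq_sInf h]
  refine le_csInf ⟨_, stairPath_cost_mem_pathCosts⟩ ?_
  rintro _ ⟨m, z, hz, rfl, rfl, rfl⟩
  exact add_one_mul_le_sum_nu hz (linf_sub_comm (z 0) (z m) ▸ hK) hg0 hg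

theorem rho_le_of_forall_nu_le (h : x ≠ y) {b : ℝ}
    (hb : ∀ p : Fin d → ℤ, linf p ≤ linf x + linf (x - y) → linf x ≤ linf p + linf (x - y) →
      nu α p ≤ b) :
    rho α x y ≤ (d + 1) * linf (x - y) * b := by
  have hpath : ∀ t, nu α (stairPath x y t) ≤ b := fun t =>
    hb _ (linf_stairPath_le t) (linf_le_linf_stairPath_add t)
  have hb0 : 0 ≤ b := (nu_pos α _).le.trans (hpath 0)
  have hlen : (l1 (y - x) : ℝ) + 1 ≤ (d + 1) * linf (x - y) := by
    have h1 : l1 (y - x) ≤ d * linf (x - y) := linf_sub_comm x y ▸ l1_le_mul_linf (y - x)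
    have h2 := one_le_linf_sub h
    have : l1 (y - x) + 1 ≤ (d + 1) * linf (x - y) := by nlinarith
    exact_mod_cast this
  calc rho α x y ≤ ∑ t ∈ range (l1 (y - x) + 1), nu α (stairPath x y t) := rho_le_stairPath_cost h
    _ ≤ (l1 (y - x) + 1) * b := by
      simpa using sum_le_card_nsmul (range (l1 (y - x) + 1)) _ _ fun t _ => hpath t
    _ ≤ (d + 1) * linf (x - y) * b := by gcongr

theorem rho_le_sum_range_max_one_rpow (hα : α ≤ 0) (h : x ≠ y) :
    rho α x y ≤
      2 * d * ∑ u ∈ range (linf x + linf (x - y) + 1), ((max u 1 : ℕ) : ℝ) ^ α + 1 := by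
  have hy : nu α y ≤ 1 := Real.rpow_le_one_of_one_le_of_nonpos
    (by exact_mod_cast le_max_right (linf y) 1) hα
  calc rho α x y ≤ ∑ t ∈ range (l1 (y - x) + 1), nu α (stairPath x y t) := rho_le_stairPath_cost h
    _ = ∑ j ∈ range d, ∑ t ∈ Ico (legStart x y j) (legStart x y (j + 1)), nu α (stairPath x y t)
        + nu α y := by
      rw [sum_range_succ, stairPath_l1, ← legStart_dim, sum_range_legStart]
    _ ≤ ∑ j ∈ range d, 2 * ∑ u ∈ range (linf x + linf (x - y) + 1), ((max u 1 : ℕ) : ℝ) ^ α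
        + 1 := by
      gcongr with j hj
      exact sum_leg_nu_le hα (mem_range.1 hj) le_rfl
    _ = _ := by rw [sum_const, card_range, nsmul_eq_mul]; ring

theorem mul_rhox_le_rho_of_nonpos (hα : α ≤ 0) (h : x ≠ y) :
    2 ^ α * rhox α x (linf (x - y)) ≤ rho α x y := by
  have hr : (1 : ℝ) ≤ linf (x - y) := by exact_mod_cast one_le_linf_sub h
  set r : ℝ := (linf (x - y) : ℝ) with hr_def
  set R := max (linf x : ℝ) r
  have hR : r ≤ R := le_max_right _ _
  have hball : ∀ c, linf (c - x) ≤ linf (x - y) → (2 * R) ^ α ≤ nu α c := fun c hc => by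
    have : linf c ≤ linf x + linf (x - y) := (linf_le_linf_add_linf_sub c x).trans (by omega)
    have : (linf c : ℝ) ≤ linf x + r := by rw [hr_def]; exact_mod_cast this
    refine Real.rpow_le_rpow_of_nonpos (by positivity) ?_ hα
    push_cast
    exact max_le (by linarith [le_max_left (linf x : ℝ) r]) (by linarith)
  calc 2 ^ α * rhox α x r = r * (2 * R) ^ α := by
        rw [rhox, Real.mul_rpow zero_le_two (by positivity)]; ring
    _ ≤ (linf (x - y) + 1) * (2 * R) ^ α := by gcongr; linarith
    _ ≤ rho α x y := add_one_mul_le_rho h le_rfl (by positivity) hball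

/-- For `α ≥ 0` the cost is already paid within distance `r / 4` of whichever endpoint has norm
at least `max(|x|, r) / 2`, where `r = |x - y|`. -/
theorem mul_rhox_le_rho_of_nonneg (hα : 0 ≤ α) (h : x ≠ y) :
    4 ^ (-(1 + α)) * rhox α x (linf (x - y)) ≤ rho α x y := by
  have hr : (1 : ℝ) ≤ linf (x - y) := by exact_mod_cast one_le_linf_sub h
  set r : ℝ := (linf (x - y) : ℝ) with hr_def
  set R := max (linf x : ℝ) r
  have hR : r ≤ R := le_max_right _ _
  have key : ∀ v w : Fin d → ℤ, v ≠ w → linf (v - w) = linf (x - y) → R ≤ 2 * linf v →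
      4 ^ (-(1 + α)) * (R ^ α * r) ≤ rho α v w := by
    intro v w hvw hvw' hv
    have hK : (r / 4 : ℝ) ≤ (linf (x - y) / 4 : ℕ) + 1 := by
      have : linf (x - y) < 4 * (linf (x - y) / 4) + 4 := by omega
      have : (linf (x - y) : ℝ) < 4 * (linf (x - y) / 4 : ℕ) + 4 := by exact_mod_cast this
      linarith
    have hball : ∀ c, linf (c - v) ≤ linf (x - y) / 4 → (R / 4) ^ α ≤ nu α c := fun c hc => by
      have : (linf v : ℝ) ≤ linf c + r / 4 := by
        have := linf_le_linf_add_linf_sub v c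
        rw [linf_sub_comm] at this
        have : (linf v : ℝ) ≤ linf c + (linf (x - y) / 4 : ℕ) := by
          exact_mod_cast this.trans (by omega)
        linarith [(Nat.cast_div_le : ((linf (x - y) / 4 : ℕ) : ℝ) ≤ _ / _)]
      refine Real.rpow_le_rpow (by positivity) ?_ hα
      push_cast
      exact le_max_of_le_left (by linarith)
    calc 4 ^ (-(1 + α)) * (R ^ α * r) = r / 4 * (R / 4) ^ α := by
          rw [Real.div_rpow (by positivity) (by norm_num), Real.rpow_neg (by norm_num),
            Real.rpow_add (by norm_num), Real.rpow_one]
          field_simp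
      _ ≤ ((linf (x - y) / 4 : ℕ) + 1) * (R / 4) ^ α := by gcongr
      _ ≤ rho α v w := add_one_mul_le_rho hvw (hvw' ▸ Nat.div_le_self _ _) (by positivity) hball
  by_cases hx : R ≤ 2 * linf x
  · exact key x y h rfl hx
  · have hRr : R = r := by
      rcases max_cases (linf x : ℝ) r with ⟨h1, -⟩ | ⟨h1, -⟩ <;> linarith
    have : r ≤ linf x + linf y := by rw [hr_def]; exact_mod_cast linf_sub_le x y
    rw [rho_comm]
    exact key y x h.symm (linf_sub_comm y x) (by linarith)

theorem rho_le_mul_rhox_of_nonneg (hα : 0 ≤ α) (h : x ≠ y) :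
    rho α x y ≤ (d + 1) * 2 ^ α * rhox α x (linf (x - y)) := by
  have hr : (1 : ℝ) ≤ linf (x - y) := by exact_mod_cast one_le_linf_sub h
  set r : ℝ := (linf (x - y) : ℝ) with hr_def
  set R := max (linf x : ℝ) r
  have hbound : ∀ p : Fin d → ℤ, linf p ≤ linf x + linf (x - y) → nu α p ≤ (2 * R) ^ α :=
    fun p hp => by
      have : (linf p : ℝ) ≤ linf x + r := by rw [hr_def]; exact_mod_cast hp
      refine Real.rpow_le_rpow (by positivity) ?_ hα
      push_cast
      exact max_le (by linarith [le_max_left (linf x : ℝ) r, le_max_right (linf x : ℝ) r])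
        (by linarith [le_max_right (linf x : ℝ) r])
  calc rho α x y ≤ (d + 1) * r * (2 * R) ^ α :=
        rho_le_of_forall_nu_le h fun p hp _ => hbound p hp
    _ = (d + 1) * 2 ^ α * rhox α x r := by
        rw [rhox, Real.mul_rpow zero_le_two (by positivity)]; ring

theorem rho_le_mul_rhox_of_far (hα : α ≤ 0) (h : x ≠ y) (hfar : 2 * linf (x - y) ≤ linf x) :
    rho α x y ≤ (d + 1) * 2 ^ (-α) * rhox α x (linf (x - y)) := by
  have hfar' : 2 * (linf (x - y) : ℝ) ≤ linf x := by exact_mod_cast hfar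
  have hr : (1 : ℝ) ≤ linf (x - y) := by exact_mod_cast one_le_linf_sub h
  set r : ℝ := (linf (x - y) : ℝ) with hr_def
  have hR : max (linf x : ℝ) r = linf x := max_eq_left (by linarith)
  have hbound : ∀ p : Fin d → ℤ, linf x ≤ linf p + linf (x - y) →
      nu α p ≤ ((linf x : ℝ) / 2) ^ α := fun p hp => by
    have : (linf x : ℝ) ≤ linf p + r := by rw [hr_def]; exact_mod_cast hp
    refine Real.rpow_le_rpow_of_nonpos (by linarith) ?_ hα
    push_cast
    exact le_max_of_le_left (by linarith)
  calc rho α x y ≤ (d + 1) * r * ((linf x : ℝ) / 2) ^ α :=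
        rho_le_of_forall_nu_le h fun p _ hp => hbound p hp
    _ = (d + 1) * 2 ^ (-α) * rhox α x r := by
        rw [rhox, hR, Real.div_rpow (by positivity) zero_le_two, Real.rpow_neg zero_le_two]
        field_simp

theorem rho_le_mul_rhox_of_near (hα : -1 < α) (hα0 : α ≤ 0) (h : x ≠ y)
    (hnear : linf x ≤ 2 * linf (x - y)) :
    rho α x y ≤ 2 ^ (-α) * ((d + 1) * (2 + 6 / (1 + α))) * rhox α x (linf (x - y)) := by
  have hp : 0 < 1 + α := by linarith
  have hnear' : (linf x : ℝ) ≤ 2 * linf (x - y) := by exact_mod_cast hnear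
  have hr : (1 : ℝ) ≤ linf (x - y) := by exact_mod_cast one_le_linf_sub h
  have hsum : rho α x y ≤
      2 * d * (1 + ((linf x + linf (x - y) : ℕ) : ℝ) ^ (1 + α) / (1 + α)) + 1 :=
    (rho_le_sum_range_max_one_rpow hα0 h).trans
      (by gcongr; exact sum_range_max_one_rpow_le hα hα0 _)
  push_cast at hsum
  set r : ℝ := (linf (x - y) : ℝ) with hr_def
  set R := max (linf x : ℝ) r
  have hS : ((linf x : ℝ) + r) ^ (1 + α) ≤ 3 * r ^ (1 + α) := calc
    ((linf x : ℝ) + r) ^ (1 + α) ≤ (3 * r) ^ (1 + α) := by gcongr; linarith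
    _ = 3 ^ (1 + α) * r ^ (1 + α) := Real.mul_rpow (by norm_num) (by positivity)
    _ ≤ 3 * r ^ (1 + α) := by
      gcongr
      exact Real.rpow_le_self_of_one_le (by norm_num) (by linarith)
  have hr1 : 1 ≤ r ^ (1 + α) := Real.one_le_rpow hr hp.le
  have hrR : r ^ (1 + α) ≤ 2 ^ (-α) * rhox α x r := by
    have : (2 * r) ^ α ≤ R ^ α :=
      Real.rpow_le_rpow_of_nonpos (by positivity) (max_le (by linarith) (by linarith)) hα0
    rw [Real.mul_rpow zero_le_two (by positivity)] at this
    rw [rhox, Real.rpow_add (by positivity), Real.rpow_one, Real.rpow_neg zero_le_two]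
    rw [← mul_le_mul_iff_of_pos_left (Real.rpow_pos_of_pos two_pos α)]
    field_simp
    nlinarith
  have hd : (0 : ℝ) ≤ d := d.cast_nonneg
  have hk : 0 ≤ 6 / (1 + α) := by positivity
  calc rho α x y ≤ 2 * d * (1 + 3 * r ^ (1 + α) / (1 + α)) + 1 := hsum.trans (by gcongr)
    _ = 2 * d + 1 + d * (6 / (1 + α)) * r ^ (1 + α) := by ring
    _ ≤ (d + 1) * (2 + 6 / (1 + α)) * r ^ (1 + α) := by
      nlinarith [mul_le_mul_of_nonneg_left hr1 hd, mul_le_mul_of_nonneg_left hr1 hk]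
    _ ≤ (d + 1) * (2 + 6 / (1 + α)) * (2 ^ (-α) * rhox α x r) := by gcongr
    _ = 2 ^ (-α) * ((d + 1) * (2 + 6 / (1 + α))) * rhox α x r := by ring

theorem rhox_nonneg (α : ℝ) (x : Fin d → ℤ) {r : ℝ} (hr : 0 ≤ r) : 0 ≤ rhox α x r :=
  mul_nonneg (Real.rpow_nonneg (le_max_of_le_right hr) α) hr

theorem mul_rhox_le_rho (h : x ≠ y) :
    min (2 ^ α) (4 ^ (-(1 + α))) * rhox α x (linf (x - y)) ≤ rho α x y := by
  have hρ := rhox_nonneg α x (Nat.cast_nonneg (α := ℝ) (linf (x - y)))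
  rcases le_total α 0 with hα | hα
  · exact (mul_le_mul_of_nonneg_right (min_le_left _ _) hρ).trans (mul_rhox_le_rho_of_nonpos hα h)
  · exact (mul_le_mul_of_nonneg_right (min_le_right _ _) hρ).trans
      (mul_rhox_le_rho_of_nonneg hα h)

theorem rho_le_mul_rhox (hα : -1 < α) (h : x ≠ y) :
    rho α x y ≤ 2 ^ |α| * ((d + 1) * (2 + 6 / (1 + α))) * rhox α x (linf (x - y)) := by
  have hρ := rhox_nonneg α x (Nat.cast_nonneg (α := ℝ) (linf (x - y)))
  have hk : (d + 1 : ℝ) ≤ (d + 1) * (2 + 6 / (1 + α)) := by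
    have : 0 ≤ 6 / (1 + α) := div_nonneg (by norm_num) (by linarith)
    nlinarith [(d.cast_nonneg : (0 : ℝ) ≤ d)]
  rcases le_total 0 α with hα0 | hα0
  · refine (rho_le_mul_rhox_of_nonneg hα0 h).trans (mul_le_mul_of_nonneg_right ?_ hρ)
    rw [abs_of_nonneg hα0, mul_comm (2 ^ α)]
    gcongr
  · rw [abs_of_nonpos hα0]
    rcases le_total (2 * linf (x - y)) (linf x) with hfar | hnear
    · refine (rho_le_mul_rhox_of_far hα0 h hfar).trans (mul_le_mul_of_nonneg_right ?_ hρ)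
      rw [mul_comm _ (2 ^ (-α))]
      gcongr
    · exact rho_le_mul_rhox_of_near hα hα0 h hnear

end ZdMetric

open ZdMetric in
theorem rho_comparable_rhox_general (d : ℕ) (α : ℝ) (hα : -1 < α) :
    ∃ c₁ : ℝ, 0 < c₁ ∧ c₁ ≤ 1 ∧
      ∀ x y : Fin d → ℤ, x ≠ y →
        c₁ * rhox α x ((linf (x - y) : ℕ) : ℝ) ≤ rho α x y ∧
          rho α x y ≤ c₁⁻¹ * rhox α x ((linf (x - y) : ℕ) : ℝ) := by
  set c := min ((2 : ℝ) ^ α) (4 ^ (-(1 + α)))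
  set C := (2 : ℝ) ^ |α| * ((d + 1) * (2 + 6 / (1 + α)))
  have hc : 0 < c := lt_min (by positivity) (by positivity)
  have hC : 0 < C := by
    have : 0 < 6 / (1 + α) := div_pos (by norm_num) (by linarith)
    positivity
  have hc₁ : 0 < min c C⁻¹ := lt_min hc (inv_pos.2 hC)
  refine ⟨min c C⁻¹, hc₁, (min_le_left _ _).trans ?_, fun x y h => ⟨?_, ?_⟩⟩
  · rcases le_total α 0 with hα0 | hα0
    · exact (min_le_left _ _).trans (Real.rpow_le_one_of_one_le_of_nonpos one_le_two hα0)
    · exact (min_le_right _ _).trans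
        (Real.rpow_le_one_of_one_le_of_nonpos (by norm_num) (by linarith))
  · exact (mul_le_mul_of_nonneg_right (min_le_left _ _) (rhox_nonneg α x (by positivity))).trans
      (mul_rhox_le_rho h)
  · exact (rho_le_mul_rhox hα h).trans (mul_le_mul_of_nonneg_right
      ((le_inv_comm₀ hc₁ hC).1 (min_le_right _ _)) (rhox_nonneg α x (by positivity)))

/-- There is `c₁ ∈ (0,1]`, depending only on `α` and `d`, such that
for all `x ≠ y` in `ℤ^d`, `c₁ ρ_x(|x-y|) ≤ ρ(x,y) ≤ c₁⁻¹ ρ_x(|x-y|)`. -/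
theorem rho_comparable_rhox (d : ℕ) (hd : 1 ≤ d) (α : ℝ) (hα : -1 < α) :
    ∃ c₁ : ℝ, 0 < c₁ ∧ c₁ ≤ 1 ∧
      ∀ x y : Fin d → ℤ, x ≠ y →
        c₁ * rhox α x ((linf (x - y) : ℕ) : ℝ) ≤ rho α x y ∧
          rho α x y ≤ c₁⁻¹ * rhox α x ((linf (x - y) : ℕ) : ℝ) :=
  rho_comparable_rhox_general d α hα
end
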